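/- For the diagonal sequence d_k = p^(k)_k, one has lim_{k→∞} d_{k+1}/d_k = ∞; consequently the ratio set of Diag P = { p^(k)_k : k ≥ 1 } has no accumulation points in (0, ∞) and is not dense in ℝ⁺. -/

import Mathlib

open Filter Topology

/-- `pseq n` is the `n`-th prime number, with `pseq 1 = 2`. -/
noncomputable def pseq (n : ℕ) : ℕ := Nat.nth Nat.Prime (n - 1)

/-- `pk k n = p^(k)_n`: the `k`-fold iterate of `n ↦ p_n` applied to `n`. -/
noncomputable def pk (k n : ℕ) : ℕ := pseq^[k] n

lemma totient_prod_primes (s : Finset ℕ) (hs : ∀ p ∈ s, p.Prime) :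
    Nat.totient (∏ p ∈ s, p) = ∏ p ∈ s, (p - 1) := by
  classical
  induction s using Finset.induction_on with
  | empty => simp
  | @insert a s hns ih =>
    have hcop : Nat.Coprime a (∏ p ∈ s, p) :=
      Nat.Coprime.prod_right fun q hq =>
        (Nat.coprime_primes (hs a (Finset.mem_insert_self a s))
          (hs q (Finset.mem_insert_of_mem hq))).mpr (fun h => hns (h ▸ hq))
    rw [Finset.prod_insert hns, Finset.prod_insert hns, Nat.totient_mul hcop,
      Nat.totient_prime (hs a (Finset.mem_insert_self a s)),
      ih (fun p hp => hs p (Finset.mem_insert_of_mem hp))]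

lemma exists_totient_small (ε : ℝ) (hε : 0 < ε) :
    ∃ a : ℕ, 0 < a ∧ (a.totient : ℝ) < ε * a := by
  classical
  have hdiv := (not_summable_iff_tendsto_nat_atTop_of_nonneg
      (f := Set.indicator {p | Nat.Prime p} fun n => (1 : ℝ) / n)
      (fun n => Set.indicator_nonneg (fun i _ => by positivity) n)).mp
    not_summable_one_div_on_primes
  obtain ⟨n, hn⟩ := (hdiv.eventually_ge_atTop (-Real.log ε + 1)).exists
  set s := (Finset.range n).filter Nat.Prime with hsdef
  have hsp : ∀ p ∈ s, Nat.Prime p := fun p hp => (Finset.mem_filter.mp hp).2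
  have hprodpos : 0 < ∏ p ∈ s, p := Finset.prod_pos fun p hp => (hsp p hp).pos
  refine ⟨∏ p ∈ s, p, hprodpos, ?_⟩
  have hsum : ∑ p ∈ s, (1 : ℝ) / p
      = ∑ i ∈ Finset.range n, Set.indicator {p | Nat.Prime p} (fun m => (1 : ℝ) / m) i := by
    rw [hsdef, Finset.sum_filter]
    exact Finset.sum_congr rfl fun i _ => by
      by_cases h : Nat.Prime i <;> simp [Set.indicator_apply, h]
  have hSbig : -Real.log ε < ∑ p ∈ s, (1 : ℝ) / p := by rw [hsum]; linarith
  have hexp : Real.exp (-∑ p ∈ s, (1 : ℝ) / p) < ε := by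
    rw [← Real.exp_log hε]
    exact Real.exp_lt_exp.mpr (by linarith)
  have hcast : (Nat.totient (∏ p ∈ s, p) : ℝ) = ∏ p ∈ s, ((p : ℝ) - 1) := by
    rw [totient_prod_primes s hsp, Nat.cast_prod]
    exact Finset.prod_congr rfl fun p hp => by
      rw [Nat.cast_sub (hsp p hp).one_lt.le, Nat.cast_one]
  rw [hcast]
  have hterm : ∀ p ∈ s, ((p : ℝ) - 1) / p ≤ Real.exp (-(1 / p)) := by
    intro p hp
    have hp0 : (0 : ℝ) < p := by exact_mod_cast (hsp p hp).pos
    have := Real.add_one_le_exp (-(1 / (p : ℝ)))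
    have h1 : ((p : ℝ) - 1) / p = -(1 / p) + 1 := by field_simp; ring
    rw [h1]; exact this
  have hprod : ∏ p ∈ s, ((p : ℝ) - 1) / p ≤ Real.exp (-∑ p ∈ s, (1 : ℝ) / p) := by
    rw [← Finset.sum_neg_distrib, Real.exp_sum]
    refine Finset.prod_le_prod (fun p hp => ?_) hterm
    have hp1 : (1 : ℝ) ≤ p := by exact_mod_cast (hsp p hp).one_lt.le
    have hp0 : (0 : ℝ) < p := by linarith
    exact div_nonneg (by linarith) hp0.le
  have hPpos : (0 : ℝ) < ∏ p ∈ s, (p : ℝ) := by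
    rw [← Nat.cast_prod]; exact_mod_cast hprodpos
  have hsplit : ∏ p ∈ s, ((p : ℝ) - 1) = (∏ p ∈ s, ((p : ℝ) - 1) / p) * ∏ p ∈ s, (p : ℝ) := by
    rw [← Finset.prod_mul_distrib]
    refine Finset.prod_congr rfl fun p hp => ?_
    have hp0 : (p : ℝ) ≠ 0 := by exact_mod_cast (hsp p hp).pos.ne'
    field_simp
  calc ∏ p ∈ s, ((p : ℝ) - 1)
      = (∏ p ∈ s, ((p : ℝ) - 1) / p) * ∏ p ∈ s, (p : ℝ) := hsplit
    _ ≤ Real.exp (-∑ p ∈ s, (1 : ℝ) / p) * ∏ p ∈ s, (p : ℝ) :=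
        mul_le_mul_of_nonneg_right hprod hPpos.le
    _ < ε * ∏ p ∈ s, (p : ℝ) := mul_lt_mul_of_pos_right hexp hPpos
    _ = ε * (((∏ p ∈ s, p : ℕ)) : ℝ) := by rw [Nat.cast_prod]

lemma eventually_pseq_ge (C : ℝ) : ∀ᶠ n : ℕ in atTop, C * n ≤ (pseq n : ℝ) := by
  rcases le_or_gt C 0 with hC | hC
  · exact Eventually.of_forall fun n =>
      le_trans (mul_nonpos_of_nonpos_of_nonneg hC (Nat.cast_nonneg n)) (Nat.cast_nonneg _)
  obtain ⟨a, ha0, haT⟩ := exists_totient_small (1 / (2 * C)) (by positivity)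
  set B : ℝ := (Nat.primeCounting' (a + 1) : ℝ) with hB
  set T : ℝ := (a.totient : ℝ) with hT
  have hBpos : 0 ≤ B := Nat.cast_nonneg _
  have hTpos : 0 ≤ T := Nat.cast_nonneg _
  have hapos : (0 : ℝ) < a := by exact_mod_cast ha0
  obtain ⟨N2, hN2⟩ := exists_nat_ge (2 * (B + T) + 2)
  filter_upwards [eventually_ge_atTop (a + 2), eventually_ge_atTop N2] with n hn1 hn2
  set m := n - 1 with hm
  set p := Nat.nth Nat.Prime m with hp
  have hpseq : pseq n = p := rfl
  have hpge : m + 2 ≤ p := Nat.add_two_le_nth_prime m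
  have hak : a + 1 ≤ p := by omega
  have hpi : Nat.primeCounting' p ≤ Nat.primeCounting' (a + 1)
      + a.totient * ((p - (a + 1)) / a + 1) := by
    have := Nat.primeCounting'_add_le (a := a) (k := a + 1) ha0.ne' (Nat.lt_succ_self a)
      (p - (a + 1))
    rwa [Nat.add_sub_cancel' hak] at this
  have hmp : Nat.primeCounting' p = m := Nat.primeCounting'_nth_eq m
  -- cast to ℝ
  have hdivle : ((((p - (a + 1)) / a : ℕ)) : ℝ) ≤ (p : ℝ) / a := by
    calc ((((p - (a + 1)) / a : ℕ)) : ℝ) ≤ ((p - (a + 1) : ℕ) : ℝ) / a := Nat.cast_div_le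
      _ ≤ (p : ℝ) / a := by
          gcongr
          exact_mod_cast Nat.sub_le p (a + 1)
  have hkey : (m : ℝ) ≤ B + T + (T / a) * p := by
    have h1 : (m : ℝ) ≤ B + T * ((((p - (a + 1)) / a : ℕ) : ℝ) + 1) := by
      rw [hB, hT, ← hmp]
      exact_mod_cast hpi
    have h2 : T * (((p - (a + 1)) / a : ℕ) + 1) ≤ T * ((p : ℝ) / a + 1) := by
      apply mul_le_mul_of_nonneg_left _ hTpos
      linarith [hdivle]
    have h3 : T * ((p : ℝ) / a + 1) = T + (T / a) * p := by field_simp; ring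
    linarith
  have h2C : (0 : ℝ) < 2 * C := by linarith
  have hid : (1 / (2 * C)) * (2 * C) = 1 := by field_simp
  have hTa : T / a ≤ 1 / (2 * C) := by
    rw [div_le_div_iff₀ hapos h2C]
    nlinarith [mul_lt_mul_of_pos_right haT h2C, hid]
  have hp0 : (0 : ℝ) ≤ p := Nat.cast_nonneg _
  have hmn : (m : ℝ) = (n : ℝ) - 1 := by
    have : (1 : ℕ) ≤ n := by omega
    rw [hm]; push_cast [Nat.cast_sub this]; ring
  have hnN2 : (2 * (B + T) + 2 : ℝ) ≤ n := le_trans hN2 (by exact_mod_cast hn2)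
  rw [hpseq]
  -- from hkey: m ≤ B + T + p/(2C); so p ≥ 2C(m - B - T) ≥ C(m+1) = C n
  have hTap : (T / a) * p ≤ (1 / (2 * C)) * p := mul_le_mul_of_nonneg_right hTa hp0
  have hstep1 : (m : ℝ) - B - T ≤ (1 / (2 * C)) * p := by linarith
  have hstep2 : (2 * C) * ((m : ℝ) - B - T) ≤ (2 * C) * ((1 / (2 * C)) * p) :=
    mul_le_mul_of_nonneg_left hstep1 h2C.le
  have hstep3 : (2 * C) * ((1 / (2 * C)) * (p : ℝ)) = p := by field_simp
  have hstep4 : (2 * (B + T) : ℝ) ≤ (n : ℝ) - 2 := by linarith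
  have hstep5 : C * (2 * (B + T)) ≤ C * ((n : ℝ) - 2) := mul_le_mul_of_nonneg_left hstep4 hC.le
  have hmn2 : (2 * C) * (m : ℝ) = 2 * C * (n : ℝ) - 2 * C := by rw [hmn]; ring
  nlinarith [hstep2, hstep3, hstep5, hmn2]

lemma pseq_mono : Monotone pseq :=
  fun _ _ h => Nat.nth_monotone Nat.infinite_setOf_prime (by omega)

lemma lt_pseq (n : ℕ) : n < pseq n := by
  have := Nat.add_two_le_nth_prime (n - 1)
  unfold pseq
  omega

lemma pk_succ_self (k : ℕ) : pk (k + 1) (k + 1) = pseq (pk k (k + 1)) := by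
  rw [pk, Function.iterate_succ_apply']; rfl

lemma pseq_pk_le (k : ℕ) : pseq (pk k k) ≤ pk (k + 1) (k + 1) := by
  rw [pk_succ_self]
  exact pseq_mono ((pseq_mono.iterate k) (Nat.le_succ k))

lemma pk_diag_lt (k : ℕ) : pk k k < pk (k + 1) (k + 1) :=
  lt_of_lt_of_le (lt_pseq _) (pseq_pk_le k)

lemma pk_diag_strictMono : StrictMono (fun k => pk k k) :=
  strictMono_nat_of_lt_succ pk_diag_lt

lemma le_pk_diag (k : ℕ) : k ≤ pk k k := by
  induction k with
  | zero => simp [pk]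
  | succ n ih => have := pk_diag_lt n; omega

lemma eventually_pk_ratio (C : ℝ) :
    ∀ᶠ k : ℕ in atTop, C * (pk k k : ℝ) ≤ (pk (k + 1) (k + 1) : ℝ) := by
  obtain ⟨N, hN⟩ := eventually_atTop.mp (eventually_pseq_ge C)
  rw [eventually_atTop]
  refine ⟨N, fun k hk => ?_⟩
  have h1 : C * (pk k k : ℝ) ≤ (pseq (pk k k) : ℝ) := hN _ (le_trans hk (le_pk_diag k))
  exact le_trans h1 (by exact_mod_cast pseq_pk_le k)

theorem diagonal_prime_ratio_sparse :
    Tendsto (fun k : ℕ => (pk (k + 2) (k + 2) : ℝ) / (pk (k + 1) (k + 1) : ℝ))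
      atTop atTop ∧
    (∀ x : ℝ, 0 < x →
      ¬ AccPt x (𝓟 {r : ℝ | ∃ j l : ℕ, 1 ≤ j ∧ 1 ≤ l ∧
        r = (pk j j : ℝ) / (pk l l : ℝ)})) ∧
    ¬ (∀ y : ℝ, 0 < y →
        y ∈ closure {r : ℝ | ∃ j l : ℕ, 1 ≤ j ∧ 1 ≤ l ∧
          r = (pk j j : ℝ) / (pk l l : ℝ)}) := by
  have dpos : ∀ k : ℕ, 1 ≤ k → (0 : ℝ) < (pk k k : ℝ) := by
    intro k hk
    have h := le_pk_diag k
    exact_mod_cast show 0 < pk k k by omega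
  have dmono : ∀ {i j : ℕ}, i ≤ j → (pk i i : ℝ) ≤ (pk j j : ℝ) := by
    intro i j h
    exact_mod_cast pk_diag_strictMono.monotone h
  have dge : ∀ k : ℕ, (k : ℝ) ≤ (pk k k : ℝ) := fun k => by exact_mod_cast le_pk_diag k
  have part1 : Tendsto (fun k : ℕ => (pk (k + 2) (k + 2) : ℝ) / (pk (k + 1) (k + 1) : ℝ))
      atTop atTop := by
    rw [tendsto_atTop]
    intro b
    obtain ⟨N, hN⟩ := eventually_atTop.mp (eventually_pk_ratio (max b 1))
    rw [eventually_atTop]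
    refine ⟨N, fun k hk => ?_⟩
    have hpos := dpos (k + 1) (by omega)
    rw [le_div_iff₀ hpos]
    calc b * (pk (k + 1) (k + 1) : ℝ)
        ≤ max b 1 * (pk (k + 1) (k + 1) : ℝ) :=
          mul_le_mul_of_nonneg_right (le_max_left _ _) hpos.le
      _ ≤ (pk (k + 2) (k + 2) : ℝ) := hN (k + 1) (by omega)
  have noacc : ∀ x : ℝ, 0 < x →
      ¬ AccPt x (𝓟 {r : ℝ | ∃ j l : ℕ, 1 ≤ j ∧ 1 ≤ l ∧
        r = (pk j j : ℝ) / (pk l l : ℝ)}) := by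
    intro x hx hacc
    set C : ℝ := 2 * x + 2 / x + 1 with hCdef
    have hxinv : 0 < 2 / x := by positivity
    have h2x : 0 < 2 * x := by positivity
    have hCpos : 0 < C := by rw [hCdef]; linarith
    have hC2x : 2 * x < C := by rw [hCdef]; linarith
    have hC2x' : 2 / x < C := by rw [hCdef]; linarith
    have hxC2 : (2 : ℝ) < x * C := by
      rw [hCdef]
      have hexpand : x * (2 * x + 2 / x + 1) = 2 * x ^ 2 + 2 + x := by field_simp
      nlinarith [sq_nonneg x]
    obtain ⟨N, hN⟩ := eventually_atTop.mp (eventually_pk_ratio C)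
    have hstep : ∀ l j : ℕ, N ≤ l → l < j → C * (pk l l : ℝ) ≤ (pk j j : ℝ) :=
      fun l j hl hlj => le_trans (hN l hl) (dmono hlj)
    obtain ⟨M0, hM0⟩ := exists_nat_ge (C * (pk N N : ℝ) + 1)
    set M : ℕ := max M0 N with hMdef
    have hMN : N ≤ M := le_max_right _ _
    have hdM : C * (pk N N : ℝ) + 1 ≤ (pk M M : ℝ) := by
      refine le_trans hM0 (le_trans ?_ (dge M))
      exact_mod_cast le_max_left M0 N
    set F : Set ℝ :=
      ((fun q : ℕ × ℕ => (pk q.1 q.1 : ℝ) / (pk q.2 q.2 : ℝ)) '' (Set.Iic M ×ˢ Set.Iic M))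
        ∪ {1} with hF
    have hFfin : F.Finite :=
      (((Set.finite_Iic M).prod (Set.finite_Iic M)).image _).union (Set.finite_singleton 1)
    have hGfin : (F \ {x}).Finite := hFfin.diff
    have hU : Set.Ioo (x / 2) (2 * x) ∩ (F \ {x})ᶜ ∈ 𝓝 x := by
      refine Filter.inter_mem (Ioo_mem_nhds (by linarith) (by linarith)) ?_
      exact hGfin.isClosed.isOpen_compl.mem_nhds (by simp)
    obtain ⟨y, hyU, hyx⟩ := accPt_iff_nhds.mp hacc _ hU
    obtain ⟨⟨hyIoo, hyG⟩, j, l, hj, hl, rfl⟩ := hyU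
    have hy1 : x / 2 < (pk j j : ℝ) / (pk l l : ℝ) := hyIoo.1
    have hy2 : (pk j j : ℝ) / (pk l l : ℝ) < 2 * x := hyIoo.2
    have hrF : (pk j j : ℝ) / (pk l l : ℝ) ∉ F := fun h => hyG ⟨h, hyx⟩
    have hlpos := dpos l hl
    have hjpos := dpos j hj
    have hmemF : ∀ {j' l' : ℕ}, j' ≤ M → l' ≤ M →
        (pk j' j' : ℝ) / (pk l' l' : ℝ) ∈ F := by
      intro j' l' hj' hl'
      exact Or.inl ⟨(j', l'), ⟨hj', hl'⟩, rfl⟩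
    rcases lt_trichotomy j l with hjl | rfl | hlj
    · -- j < l : ratio small
      by_cases hNj : N ≤ j
      · have hCd : C * (pk j j : ℝ) ≤ (pk l l : ℝ) := hstep j l hNj hjl
        have hr : (pk j j : ℝ) / (pk l l : ℝ) ≤ 1 / C := by
          rw [div_le_div_iff₀ hlpos hCpos]
          nlinarith
        have : 1 / C < x / 2 := by
          rw [div_lt_div_iff₀ hCpos two_pos]
          nlinarith
        linarith
      · push_neg at hNj
        have hjM : j ≤ M := le_trans (le_of_lt hNj) hMN
        by_cases hlM : l ≤ M
        · exact hrF (hmemF hjM hlM)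
        · push_neg at hlM
          have hdl : C * (pk N N : ℝ) + 1 ≤ (pk l l : ℝ) := le_trans hdM (dmono hlM.le)
          have hdj : (pk j j : ℝ) ≤ (pk N N : ℝ) := dmono hNj.le
          have hdN0 : (0 : ℝ) ≤ (pk N N : ℝ) := Nat.cast_nonneg _
          have hr : (pk j j : ℝ) / (pk l l : ℝ) < x / 2 := by
            rw [div_lt_div_iff₀ hlpos two_pos]
            nlinarith [mul_le_mul_of_nonneg_left hdl hx.le,
              mul_le_mul_of_nonneg_right hxC2.le hdN0]
          linarith
    · exact hrF (Or.inr (by simp [div_self hjpos.ne']))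
    · -- l < j : ratio large
      by_cases hNl : N ≤ l
      · have hCd : C * (pk l l : ℝ) ≤ (pk j j : ℝ) := hstep l j hNl hlj
        have hr : C ≤ (pk j j : ℝ) / (pk l l : ℝ) := by
          rw [le_div_iff₀ hlpos]; linarith
        linarith
      · push_neg at hNl
        have hlM : l ≤ M := le_trans (le_of_lt hNl) hMN
        by_cases hjM : j ≤ M
        · exact hrF (hmemF hjM hlM)
        · push_neg at hjM
          have hdj : C * (pk N N : ℝ) + 1 ≤ (pk j j : ℝ) := le_trans hdM (dmono hjM.le)
          have hdl : (pk l l : ℝ) ≤ (pk N N : ℝ) := dmono hNl.le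
          have hr : 2 * x < (pk j j : ℝ) / (pk l l : ℝ) := by
            rw [lt_div_iff₀ hlpos]
            nlinarith [mul_le_mul_of_nonneg_left hdl hCpos.le,
              mul_le_mul_of_nonneg_right hC2x.le hlpos.le]
          linarith
  refine ⟨part1, noacc, ?_⟩
  intro hall
  have hs2 : (0 : ℝ) < Real.sqrt 2 := Real.sqrt_pos.mpr (by norm_num)
  have hmem := hall _ hs2
  rw [mem_closure_iff_clusterPt] at hmem
  have hnot : Real.sqrt 2 ∉ {r : ℝ | ∃ j l : ℕ, 1 ≤ j ∧ 1 ≤ l ∧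
      r = (pk j j : ℝ) / (pk l l : ℝ)} := by
    rintro ⟨j, l, -, -, heq⟩
    exact irrational_sqrt_two ⟨(pk j j : ℚ) / (pk l l : ℚ), by push_cast; exact heq.symm⟩
  refine noacc _ hs2 ?_
  rw [accPt_principal_iff_clusterPt, Set.diff_singleton_eq_self hnot]
  exact hmem
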